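/- Product recursion for stationary level vectors: for all ν, m with 0 ≤ ν ≤ m ≤ M, π^m = π^ν R_{ν+1} R_{ν+2} ⋯ R_m (the empty product for ν = m being the identity matrix). -/
import Mathlib


open Matrix

private lemma stmt4_tri_sum0 {N : ℕ} (F : ℕ → ℝ) (hF : ∀ k, 1 < k → F k = 0) :
    ∑ k ∈ Finset.range (N+2), F k = F 0 + F 1 := by
  have hsub : ({0, 1} : Finset ℕ) ⊆ Finset.range (N+2) := by
    intro x hx
    simp only [Finset.mem_insert, Finset.mem_singleton] at hx
    simp only [Finset.mem_range]; omega
  calc ∑ k ∈ Finset.range (N+2), F k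
      = ∑ k ∈ ({0, 1} : Finset ℕ), F k := by
        refine (Finset.sum_subset hsub fun x _ hx => hF x ?_).symm
        simp only [Finset.mem_insert, Finset.mem_singleton] at hx; omega
    _ = F 0 + F 1 := by
        rw [Finset.sum_insert (by simp), Finset.sum_singleton]

private lemma stmt4_tri_sum {N n : ℕ} (F : ℕ → ℝ) (h1 : 1 ≤ n) (h2 : n ≤ N)
    (hF : ∀ k, k + 1 < n ∨ n + 1 < k → F k = 0) :
    ∑ k ∈ Finset.range (N+2), F k = F (n-1) + F n + F (n+1) := by
  have hsub : ({n-1, n, n+1} : Finset ℕ) ⊆ Finset.range (N+2) := by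
    intro x hx
    simp only [Finset.mem_insert, Finset.mem_singleton] at hx
    simp only [Finset.mem_range]; omega
  calc ∑ k ∈ Finset.range (N+2), F k
      = ∑ k ∈ ({n-1, n, n+1} : Finset ℕ), F k := by
        refine (Finset.sum_subset hsub fun x _ hx => hF x ?_).symm
        simp only [Finset.mem_insert, Finset.mem_singleton] at hx; omega
    _ = F (n-1) + F n + F (n+1) := by
        rw [Finset.sum_insert (by simp only [Finset.mem_insert, Finset.mem_singleton]; omega),
            Finset.sum_insert (by simp only [Finset.mem_singleton]; omega),
            Finset.sum_singleton, add_assoc]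

theorem stmt_4
    (M l : ℕ) (hM : 1 ≤ M)
    (Q : Matrix (Fin (M+1) × Fin (l+1)) (Fin (M+1) × Fin (l+1)) ℝ)
    (htri : ∀ (m n : Fin (M+1)) (i j : Fin (l+1)),
      1 < |(m.val : ℤ) - (n.val : ℤ)| → Q (m, i) (n, j) = 0)
    (hrow : ∀ s, ∑ t, Q s t = 0)
    (W U D : ℕ → Matrix (Fin (l+1)) (Fin (l+1)) ℝ)
    (hW : ∀ (m : ℕ) (hm : m ≤ M) (i j : Fin (l+1)),
      W m i j = Q (⟨m, by omega⟩, i) (⟨m, by omega⟩, j))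
    (hU : ∀ (m : ℕ) (hm : m < M) (i j : Fin (l+1)),
      U m i j = Q (⟨m, by omega⟩, i) (⟨m+1, by omega⟩, j))
    (hD : ∀ (m : ℕ) (hm1 : 1 ≤ m) (hm2 : m ≤ M) (i j : Fin (l+1)),
      D m i j = Q (⟨m, by omega⟩, i) (⟨m-1, by omega⟩, j))
    (hDES : ∀ (m : ℕ), 1 ≤ m → m ≤ M → ∀ (i j : Fin (l+1)), j ≠ 0 → D m i j = 0)
    (Ut : ℕ → Matrix (Fin (l+1)) (Fin (l+1)) ℝ)
    (hUt : ∀ (m : ℕ), m < M → ∀ (i j : Fin (l+1)),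
      Ut m i j = if j = 0 then ∑ k, U m i k else 0)
    (hUtM : Ut M = 0)
    (B : ℕ → Matrix (Fin (l+1)) (Fin (l+1)) ℝ)
    (hB : ∀ (m : ℕ), m ≤ M → B m = W m + Ut m)
    (π : Fin (M+1) × Fin (l+1) → ℝ)
    (hπ : Matrix.vecMul π Q = 0)
    (hBinv : ∀ (m : ℕ), 1 ≤ m → m ≤ M → IsUnit (B m))
    (R : ℕ → Matrix (Fin (l+1)) (Fin (l+1)) ℝ)
    (hR : ∀ (m : ℕ), 1 ≤ m → m ≤ M → R m = -(U (m-1) * (B m)⁻¹)) :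
    ∀ (ν m : ℕ) (h1 : ν ≤ m) (h2 : m ≤ M),
      (fun i => π (⟨m, by omega⟩, i))
        = Matrix.vecMul (fun i => π (⟨ν, by omega⟩, i))
            (((List.range' (ν+1) (m-ν)).map R).prod) := by
  classical
  let p : ℕ → Fin (l+1) → ℝ := fun k i =>
    if h : k ≤ M then π (⟨k, by omega⟩, i) else 0
  let v : ℕ → ℕ → Fin (l+1) → ℝ := fun a b j =>
    if h : a ≤ M ∧ b ≤ M then
      ∑ i, π (⟨a, by omega⟩, i) * Q (⟨a, by omega⟩, i) (⟨b, by omega⟩, j)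
    else 0
  let g : ℕ → ℕ → ℝ := fun a b => ∑ j, v a b j
  have hp : ∀ k, ∀ hk : k ≤ M, ∀ i, p k i = π (⟨k, by omega⟩, i) := by
    intro k hk i
    show dite _ _ _ = _
    rw [dif_pos hk]
  have hvdef : ∀ a b, ∀ ha : a ≤ M, ∀ hb : b ≤ M, ∀ j,
      v a b j = ∑ i, π (⟨a, by omega⟩, i) * Q (⟨a, by omega⟩, i) (⟨b, by omega⟩, j) := by
    intro a b ha hb j
    show dite _ _ _ = _
    rw [dif_pos (And.intro ha hb)]
  have hv_out : ∀ a b j, (M < a ∨ M < b) → v a b j = 0 := by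
    intro a b j h
    show dite _ _ _ = _
    rw [dif_neg (by omega : ¬(a ≤ M ∧ b ≤ M))]
  have hv_tri : ∀ a b j, (a + 1 < b ∨ b + 1 < a) → v a b j = 0 := by
    intro a b j hab
    by_cases h : a ≤ M ∧ b ≤ M
    · rw [hvdef a b h.1 h.2 j]
      refine Finset.sum_eq_zero fun i _ => mul_eq_zero_of_right _ ?_
      have key : (1:ℤ) < |(a:ℤ) - (b:ℤ)| := by
        rcases hab with h'|h'
        · rw [abs_of_nonpos (by omega)]; omega
        · rw [abs_of_nonneg (by omega)]; omega
      exact htri ⟨a, by omega⟩ ⟨b, by omega⟩ i j key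
    · exact hv_out a b j (by omega)
  have hg_tri : ∀ a b, (a + 1 < b ∨ b + 1 < a ∨ M < a ∨ M < b) → g a b = 0 := by
    intro a b h
    refine Finset.sum_eq_zero fun j _ => ?_
    rcases h with h|h|h|h
    · exact hv_tri a b j (Or.inl h)
    · exact hv_tri a b j (Or.inr h)
    · exact hv_out a b j (Or.inl h)
    · exact hv_out a b j (Or.inr h)
  -- balance equations
  have bal : ∀ n, ∀ hn : n ≤ M, ∀ j, ∑ k ∈ Finset.range (M+2), v k n j = 0 := by
    intro n hn j
    have h0 : ∑ s : Fin (M+1) × Fin (l+1), π s * Q s (⟨n, by omega⟩, j) = 0 := by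
      have := congrFun hπ (⟨n, by omega⟩, j)
      simpa [Matrix.vecMul, dotProduct] using this
    rw [Fintype.sum_prod_type] at h0
    have key : ∑ a : Fin (M+1), (∑ i, π (a, i) * Q (a, i) (⟨n, by omega⟩, j))
        = ∑ k ∈ Finset.range (M+1), v k n j := by
      rw [← Fin.sum_univ_eq_sum_range (fun k => v k n j) (M+1)]
      exact Finset.sum_congr rfl fun a _ =>
        (hvdef a.val n (Nat.lt_succ_iff.mp a.isLt) hn j).symm
    rw [Finset.sum_range_succ, hv_out (M+1) n j (Or.inl (by omega)), add_zero, ← key]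
    exact h0
  -- row sums
  have rowsum : ∀ a, a ≤ M → ∑ k ∈ Finset.range (M+2), g a k = 0 := by
    intro a ha
    have hgz : g a (M+1) = 0 :=
      Finset.sum_eq_zero fun j _ => hv_out a (M+1) j (Or.inr (by omega))
    have key : ∀ b : Fin (M+1), g a b.val
        = ∑ i, ∑ jj, π (⟨a, by omega⟩, i) * Q (⟨a, by omega⟩, i) (b, jj) := by
      intro b
      calc g a b.val
          = ∑ jj, ∑ i, π (⟨a, by omega⟩, i) * Q (⟨a, by omega⟩, i) (b, jj) :=
            Finset.sum_congr rfl fun jj _ =>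
              hvdef a b.val ha (Nat.lt_succ_iff.mp b.isLt) jj
        _ = ∑ i, ∑ jj, π (⟨a, by omega⟩, i) * Q (⟨a, by omega⟩, i) (b, jj) :=
            Finset.sum_comm
    calc ∑ k ∈ Finset.range (M+2), g a k
        = ∑ k ∈ Finset.range (M+1), g a k + g a (M+1) := Finset.sum_range_succ _ _
      _ = ∑ k ∈ Finset.range (M+1), g a k := by rw [hgz, add_zero]
      _ = ∑ b : Fin (M+1), g a b.val :=
          (Fin.sum_univ_eq_sum_range (fun k => g a k) (M+1)).symm
      _ = ∑ b : Fin (M+1), ∑ i, ∑ jj, π (⟨a, by omega⟩, i) * Q (⟨a, by omega⟩, i) (b, jj) :=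
          Finset.sum_congr rfl fun b _ => key b
      _ = ∑ i, ∑ b : Fin (M+1), ∑ jj, π (⟨a, by omega⟩, i) * Q (⟨a, by omega⟩, i) (b, jj) :=
          Finset.sum_comm
      _ = ∑ i : Fin (l+1), π (⟨a, by omega⟩, i) * ∑ t, Q (⟨a, by omega⟩, i) t := by
          refine Finset.sum_congr rfl fun i _ => ?_
          rw [Fintype.sum_prod_type (f := fun t => Q (⟨a, by omega⟩, i) t), Finset.mul_sum]
          exact Finset.sum_congr rfl fun b _ => (Finset.mul_sum _ _ _).symm
      _ = 0 := Finset.sum_eq_zero fun i _ => by rw [hrow, mul_zero]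
  -- summed balance
  have gbal : ∀ n, n ≤ M → ∑ k ∈ Finset.range (M+2), g k n = 0 := by
    intro n hn
    calc ∑ k ∈ Finset.range (M+2), g k n
        = ∑ k ∈ Finset.range (M+2), ∑ j, v k n j :=
          Finset.sum_congr rfl fun k _ => rfl
      _ = ∑ j, ∑ k ∈ Finset.range (M+2), v k n j := Finset.sum_comm
      _ = 0 := Finset.sum_eq_zero fun j _ => bal n hn j
  -- flow lemma
  have flow : ∀ n, n < M → g (n+1) n = g n (n+1) := by
    intro n
    induction n with
    | zero =>
      intro h0M
      have b0 : g 0 0 + g 1 0 = 0 := by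
        rw [← stmt4_tri_sum0 (N := M) (fun k => g k 0) (fun k hk => hg_tri k 0 (by omega))]
        exact gbal 0 (by omega)
      have r0 : g 0 0 + g 0 1 = 0 := by
        rw [← stmt4_tri_sum0 (N := M) (fun k => g 0 k) (fun k hk => hg_tri 0 k (by omega))]
        exact rowsum 0 (by omega)
      linarith
    | succ n ih =>
      intro hsM
      have ihe : g (n+1) n = g n (n+1) := ih (by omega)
      have b1 : g n (n+1) + g (n+1) (n+1) + g (n+2) (n+1) = 0 := by
        have hred := stmt4_tri_sum (N := M) (n := n+1) (fun k => g k (n+1)) (by omega) (by omega)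
            (fun k hk => hg_tri k (n+1) (by omega))
        have hb := gbal (n+1) (by omega)
        rw [hred] at hb
        exact hb
      have r1 : g (n+1) n + g (n+1) (n+1) + g (n+1) (n+2) = 0 := by
        have hred := stmt4_tri_sum (N := M) (n := n+1) (fun k => g (n+1) k) (by omega) (by omega)
            (fun k hk => hg_tri (n+1) k (by omega))
        have hb := rowsum (n+1) (by omega)
        rw [hred] at hb
        exact hb
      linarith
  -- the Ut column identity
  have hUt' : ∀ n, ∀ hn : n ≤ M, ∀ j, (∑ i, p n i * Ut n i j) = v (n+1) n j := by
    intro n hn j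
    have hDz : ∀ j : Fin (l+1), j ≠ 0 → v (n+1) n j = 0 := by
      intro j hj
      by_cases hnM : n < M
      · rw [hvdef (n+1) n (by omega) hn j]
        refine Finset.sum_eq_zero fun i _ => mul_eq_zero_of_right _ ?_
        have hd := hD (n+1) (by omega) (by omega) i j
        rw [hDES (n+1) (by omega) (by omega) i j hj] at hd
        exact hd.symm
      · exact hv_out (n+1) n j (Or.inl (by omega))
    by_cases hnM : n < M
    · by_cases hj : j = 0
      · subst hj
        have lhs : ∑ i, p n i * Ut n i 0 = g n (n+1) := by
          have e : ∀ i : Fin (l+1), p n i * Ut n i 0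
              = ∑ k, π (⟨n, by omega⟩, i) * Q (⟨n, by omega⟩, i) (⟨n+1, by omega⟩, k) := by
            intro i
            rw [hp n hn i, hUt n hnM i 0, if_pos rfl, Finset.mul_sum]
            exact Finset.sum_congr rfl fun k _ => by rw [hU n hnM i k]
          calc ∑ i, p n i * Ut n i 0
              = ∑ i, ∑ k, π (⟨n, by omega⟩, i) * Q (⟨n, by omega⟩, i) (⟨n+1, by omega⟩, k) :=
                Finset.sum_congr rfl fun i _ => e i
            _ = ∑ k, ∑ i, π (⟨n, by omega⟩, i) * Q (⟨n, by omega⟩, i) (⟨n+1, by omega⟩, k) :=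
                Finset.sum_comm
            _ = ∑ k, v n (n+1) k :=
                Finset.sum_congr rfl fun k _ => (hvdef n (n+1) hn (by omega) k).symm
            _ = g n (n+1) := rfl
        have rhs : v (n+1) n 0 = g (n+1) n := (Fintype.sum_eq_single 0 hDz).symm
        rw [lhs, rhs]
        exact (flow n hnM).symm
      · have hL : ∑ i, p n i * Ut n i j = 0 :=
          Finset.sum_eq_zero fun i _ => by rw [hUt n hnM i j, if_neg hj, mul_zero]
        rw [hL, hDz j hj]
    · have hnM' : n = M := by omega
      have hz : Ut n = 0 := by rw [hnM']; exact hUtM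
      rw [hz, hv_out (n+1) n j (Or.inl (by omega))]
      simp
  -- vector balance
  have vecC : ∀ n, 1 ≤ n → n ≤ M →
      Matrix.vecMul (p n) (B n) = - Matrix.vecMul (p (n-1)) (U (n-1)) := by
    intro n hn1 hn2
    obtain ⟨m, rfl⟩ : ∃ m, n = m + 1 := ⟨n - 1, by omega⟩
    funext j
    have hbal3 : v m (m+1) j + v (m+1) (m+1) j + v (m+2) (m+1) j = 0 := by
      have hred := stmt4_tri_sum (N := M) (n := m+1) (fun k => v k (m+1) j) (by omega) hn2
        (fun k hk => hv_tri k (m+1) j (by omega))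
      have hb := bal (m+1) hn2 j
      rw [hred] at hb
      exact hb
    have eW : ∑ i, p (m+1) i * W (m+1) i j = v (m+1) (m+1) j := by
      rw [hvdef (m+1) (m+1) hn2 hn2 j]
      exact Finset.sum_congr rfl fun i _ => by rw [hp (m+1) hn2 i, hW (m+1) hn2 i j]
    have eU : Matrix.vecMul (p m) (U m) j = v m (m+1) j := by
      show ∑ i, p m i * U m i j = _
      rw [hvdef m (m+1) (by omega) hn2 j]
      exact Finset.sum_congr rfl fun i _ => by rw [hp m (by omega) i, hU m (by omega) i j]
    have eUt : ∑ i, p (m+1) i * Ut (m+1) i j = v (m+2) (m+1) j := hUt' (m+1) hn2 j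
    have eB : Matrix.vecMul (p (m+1)) (B (m+1)) j
        = (∑ i, p (m+1) i * W (m+1) i j) + ∑ i, p (m+1) i * Ut (m+1) i j := by
      rw [hB (m+1) hn2]
      show ∑ i, p (m+1) i * (W (m+1) + Ut (m+1)) i j = _
      simp [Matrix.add_apply, mul_add, Finset.sum_add_distrib]
    calc Matrix.vecMul (p (m+1)) (B (m+1)) j
        = v (m+1) (m+1) j + v (m+2) (m+1) j := by rw [eB, eW, eUt]
      _ = - v m (m+1) j := by linarith
      _ = (- Matrix.vecMul (p m) (U m)) j := by rw [Pi.neg_apply, eU]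
  -- single step
  have step : ∀ m, m < M → p (m+1) = Matrix.vecMul (p m) (R (m+1)) := by
    intro m h
    have h1 : 1 ≤ m + 1 := by omega
    have h2 : m + 1 ≤ M := by omega
    have hC := vecC (m+1) h1 h2
    have hinv : B (m+1) * (B (m+1))⁻¹ = 1 :=
      Matrix.mul_nonsing_inv _ ((Matrix.isUnit_iff_isUnit_det _).mp (hBinv (m+1) h1 h2))
    rw [hR (m+1) h1 h2]
    calc p (m+1) = Matrix.vecMul (p (m+1)) 1 := (Matrix.vecMul_one _).symm
      _ = Matrix.vecMul (p (m+1)) (B (m+1) * (B (m+1))⁻¹) := by rw [hinv]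
      _ = Matrix.vecMul (Matrix.vecMul (p (m+1)) (B (m+1))) ((B (m+1))⁻¹) :=
          (Matrix.vecMul_vecMul _ _ _).symm
      _ = Matrix.vecMul (- Matrix.vecMul (p m) (U m)) ((B (m+1))⁻¹) := by rw [hC, Nat.add_sub_cancel]
      _ = - Matrix.vecMul (Matrix.vecMul (p m) (U m)) ((B (m+1))⁻¹) :=
          Matrix.neg_vecMul _ _
      _ = - Matrix.vecMul (p m) (U m * (B (m+1))⁻¹) := by rw [Matrix.vecMul_vecMul]
      _ = Matrix.vecMul (p m) (-(U m * (B (m+1))⁻¹)) := (Matrix.vecMul_neg _ _).symm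
  -- induction on the number of steps
  have main : ∀ d ν', ν' + d ≤ M →
      p (ν' + d) = Matrix.vecMul (p ν') (((List.range' (ν'+1) d).map R).prod) := by
    intro d
    induction d with
    | zero =>
      intro ν' _
      simp [Matrix.vecMul_one]
    | succ d ih =>
      intro ν' h
      have h' : ν' + d ≤ M := by omega
      rw [List.range'_concat, List.map_append, List.prod_append, List.map_singleton,
        List.prod_singleton, ← Matrix.vecMul_vecMul, ← ih ν' h', one_mul]
      have hadd : ν' + 1 + d = ν' + d + 1 := by omega
      rw [hadd]
      exact step (ν' + d) (by omega)
  intro ν m h1 h2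
  have hm := main (m - ν) ν (by omega)
  have hsum : ν + (m - ν) = m := by omega
  rw [hsum] at hm
  have e1 : (fun i => π ((⟨m, by omega⟩ : Fin (M+1)), i)) = p m :=
    funext fun i => (hp m h2 i).symm
  have e2 : (fun i => π ((⟨ν, by omega⟩ : Fin (M+1)), i)) = p ν :=
    funext fun i => (hp ν (le_trans h1 h2) i).symm
  exact e1.trans (hm.trans (congrArg (fun q => Matrix.vecMul q _) e2.symm))
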